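/- Suppose y = P v + P̄ ε̄ where P ∈ ℝ^{p×ℓ}, P̄ ∈ ℝ^{p×(p-ℓ)}, [P P̄] is invertible, P̄⊥ has full column rank with P̄ᵀ P̄⊥ = 0, and R = P̄⊥ (Pᵀ P̄⊥)⁻¹. Then Rᵀ y = v, i.e., the latent vector is exactly recovered by the oblique projection. -/

import Mathlib

open Matrix

namespace Matrix

variable {K m n o : Type*} [Field K] [Fintype n]

theorem mulVec_injective_of_rank_eq_card {A : Matrix m n K} (h : A.rank = Fintype.card n) :
    Function.Injective A.mulVec := by
  rw [mulVec_injective_iff, linearIndependent_iff_card_eq_finrank_span, Set.finrank,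
    ← rank_eq_finrank_span_cols, h]

variable [Fintype m]

theorem isUnit_transpose_mul_of_fromCols_mul_eq_one [Fintype o] [DecidableEq m] [DecidableEq n]
    {P N : Matrix m n K} {Q : Matrix m o K} {B : Matrix (n ⊕ o) m K}
    (hB : fromCols P Q * B = 1) (hN : Function.Injective N.mulVec) (hQN : Qᵀ * N = 0) :
    IsUnit (Pᵀ * N) := by
  have hleft : Function.LeftInverse Bᵀ.mulVec (fromCols P Q)ᵀ.mulVec := fun w => by
    rw [mulVec_mulVec, ← transpose_mul, hB, transpose_one, one_mulVec]
  have hinj : Function.Injective ((fromCols P Q)ᵀ * N).mulVec := by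
    simpa only [Function.comp_def, mulVec_mulVec] using hleft.injective.comp hN
  -- `[P Q]ᵀ N = [Pᵀ N; 0]`, so injectivity passes to `Pᵀ N`
  rw [transpose_fromCols, fromRows_mul, hQN] at hinj
  rw [← mulVec_injective_iff_isUnit]
  intro x y hxy
  apply hinj
  rw [fromRows_mulVec, fromRows_mulVec, zero_mulVec, zero_mulVec, hxy]

variable [DecidableEq n] {P N : Matrix m n K}

theorem transpose_mul_inv_transpose_mul_self (hPN : IsUnit (Pᵀ * N)) :
    (N * (Pᵀ * N)⁻¹)ᵀ * P = 1 := by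
  calc (N * (Pᵀ * N)⁻¹)ᵀ * P = (Pᵀ * N * (Pᵀ * N)⁻¹)ᵀ := by
        rw [Matrix.mul_assoc, transpose_mul Pᵀ, transpose_transpose]
    _ = 1 := by rw [mul_nonsing_inv _ ((isUnit_iff_isUnit_det _).mp hPN), transpose_one]

theorem transpose_mul_inv_transpose_mul_eq_zero {Q : Matrix m o K} (hQN : Qᵀ * N = 0) :
    (N * (Pᵀ * N)⁻¹)ᵀ * Q = 0 := by
  calc (N * (Pᵀ * N)⁻¹)ᵀ * Q = (Qᵀ * N * (Pᵀ * N)⁻¹)ᵀ := by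
        rw [Matrix.mul_assoc, transpose_mul Qᵀ, transpose_transpose]
    _ = 0 := by rw [hQN, Matrix.zero_mul, transpose_zero]

end Matrix

theorem stmt_4_general {p ℓ : ℕ}
    (P : Matrix (Fin p) (Fin ℓ) ℝ) (Pbar : Matrix (Fin p) (Fin (p - ℓ)) ℝ)
    (Pperp : Matrix (Fin p) (Fin ℓ) ℝ)
    (hrank : Pperp.rank = ℓ)
    (horth : Pbarᵀ * Pperp = 0)
    (hinv : ∃ B : Matrix (Fin ℓ ⊕ Fin (p - ℓ)) (Fin p) ℝ,
      fromCols P Pbar * B = 1 ∧ B * fromCols P Pbar = 1)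
    (R : Matrix (Fin p) (Fin ℓ) ℝ) (hR : R = Pperp * (Pᵀ * Pperp)⁻¹)
    (v : Fin ℓ → ℝ) (ebar : Fin (p - ℓ) → ℝ) (y : Fin p → ℝ)
    (hy : y = P *ᵥ v + Pbar *ᵥ ebar) :
    Rᵀ *ᵥ y = v := by
  obtain ⟨B, hB, -⟩ := hinv
  have hPperp : Function.Injective Pperp.mulVec :=
    mulVec_injective_of_rank_eq_card (by rw [hrank, Fintype.card_fin])
  have hunit : IsUnit (Pᵀ * Pperp) :=
    isUnit_transpose_mul_of_fromCols_mul_eq_one hB hPperp horth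
  subst hR hy
  rw [mulVec_add, mulVec_mulVec, mulVec_mulVec, transpose_mul_inv_transpose_mul_self hunit,
    transpose_mul_inv_transpose_mul_eq_zero horth, one_mulVec, zero_mulVec, add_zero]

theorem stmt_4 {p ℓ : ℕ} (hl : 0 < ℓ) (hlp : ℓ < p)
    (P : Matrix (Fin p) (Fin ℓ) ℝ) (Pbar : Matrix (Fin p) (Fin (p - ℓ)) ℝ)
    (Pperp : Matrix (Fin p) (Fin ℓ) ℝ)
    (hrank : Pperp.rank = ℓ)
    (horth : Pbarᵀ * Pperp = 0)
    (hinv : ∃ B : Matrix (Fin ℓ ⊕ Fin (p - ℓ)) (Fin p) ℝ,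
      fromCols P Pbar * B = 1 ∧ B * fromCols P Pbar = 1)
    (R : Matrix (Fin p) (Fin ℓ) ℝ) (hR : R = Pperp * (Pᵀ * Pperp)⁻¹)
    (v : Fin ℓ → ℝ) (ebar : Fin (p - ℓ) → ℝ) (y : Fin p → ℝ)
    (hy : y = P *ᵥ v + Pbar *ᵥ ebar) :
    Rᵀ *ᵥ y = v :=
  stmt_4_general P Pbar Pperp hrank horth hinv R hR v ebar y hy
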